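/- Let x, y be strictly positive probability vectors in ℝ^n. If e_k(x) ≤ e_k(y) for all k = 1,…,n, then the Shannon entropy satisfies −Σ_{i=1}^n x_i log x_i ≤ −Σ_{i=1}^n y_i log y_i. -/

import Mathlib

/-!
For `0 < a ≤ 1` one has `-a log a = ∫₀^∞ (log (1 + a t) - a log (1 + t)) / t² dt`, with a
nonnegative integrand by concavity of `log`. Summing over the coordinates of a probability vector
`x` writes its entropy as `∫₀^∞ (log ∏ᵢ (1 + xᵢ t) - log (1 + t)) / t² dt`, and for `t ≥ 0` the
polynomial `∏ᵢ (1 + xᵢ t) = ∑ₖ eₖ(x) tᵏ` is monotone in the `eₖ(x)`.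
-/

open Finset Real

noncomputable def esymm (n k : ℕ) (x : Fin n → ℝ) : ℝ :=
  ∑ s ∈ Finset.powersetCard k (Finset.univ : Finset (Fin n)), ∏ i ∈ s, x i

open MeasureTheory Filter Topology

noncomputable def entropyKernel (a t : ℝ) : ℝ :=
  (log (1 + a * t) - a * log (1 + t)) / t ^ 2

noncomputable def entropyKernelPrimitive (a t : ℝ) : ℝ :=
  (a * log (1 + t) - log (1 + a * t)) / t + a * log (1 + t) - a * log (1 + a * t)

section EntropyKernel

variable {a t : ℝ}

theorem entropyKernel_nonneg (ha₀ : 0 ≤ a) (ha₁ : a ≤ 1) (ht : -1 < t) :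
    0 ≤ entropyKernel a t := by
  refine div_nonneg (sub_nonneg.2 ?_) (sq_nonneg t)
  have hconc := strictConcaveOn_log_Ioi.concaveOn.2 (x := 1 + t) (y := 1)
    (by simp only [Set.mem_Ioi]; linarith) (by simp) ha₀ (sub_nonneg.2 ha₁) (by ring)
  simp only [smul_eq_mul, log_one, mul_zero, add_zero] at hconc
  convert hconc using 2
  ring

theorem hasDerivAt_entropyKernelPrimitive (ha : 0 ≤ a) (ht : 0 < t) :
    HasDerivAt (entropyKernelPrimitive a) (entropyKernel a t) t := by
  have h1t : 0 < 1 + t := by linarith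
  have h1at : 0 < 1 + a * t := by positivity
  have L1 : HasDerivAt (fun t ↦ log (1 + t)) (1 / (1 + t)) t := by
    simpa using ((hasDerivAt_id t).const_add 1).log h1t.ne'
  have L2 : HasDerivAt (fun t ↦ log (1 + a * t)) (a / (1 + a * t)) t := by
    simpa using (((hasDerivAt_id t).const_mul a).const_add 1).log h1at.ne'
  refine ((((L1.const_mul a).sub L2).div (hasDerivAt_id t) ht.ne').add (L1.const_mul a)
    |>.sub (L2.const_mul a)).congr_deriv ?_
  simp only [entropyKernel, Pi.sub_apply, id]
  field_simp
  ring

theorem continuousWithinAt_entropyKernelPrimitive_zero :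
    ContinuousWithinAt (entropyKernelPrimitive a) (Set.Ici 0) 0 := by
  rw [← continuousWithinAt_Ioi_iff_Ici]
  have hlog : ∀ c : ℝ, HasDerivAt (fun t ↦ log (1 + c * t)) c 0 := fun c ↦ by
    simpa using (((hasDerivAt_id (0 : ℝ)).const_mul c).const_add 1).log (by norm_num)
  -- `a log (1 + t) - log (1 + a t)` vanishes at `0` together with its derivative
  have hquot : Tendsto (fun t ↦ (a * log (1 + t) - log (1 + a * t)) / t) (𝓝[>] 0) (𝓝 0) := by
    have hψ := hasDerivAt_iff_tendsto_slope_zero.1 (((hlog 1).const_mul a).sub (hlog a))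
    simp only [one_mul, mul_one, sub_self, zero_add, smul_eq_mul] at hψ
    exact (hψ.mono_left (nhdsWithin_mono _ fun t ht ↦ ne_of_gt ht)).congr fun t ↦ by
      simp [inv_mul_eq_div]
  have hrest : Tendsto (fun t ↦ a * log (1 + t) - a * log (1 + a * t)) (𝓝[>] 0) (𝓝 0) := by
    have : ContinuousAt (fun t ↦ a * log (1 + t) - a * log (1 + a * t)) 0 := by
      fun_prop (disch := norm_num)
    simpa using this.tendsto.mono_left nhdsWithin_le_nhds
  have hzero : entropyKernelPrimitive a 0 = 0 := by simp [entropyKernelPrimitive]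
  have := hquot.add hrest
  rw [add_zero] at this
  rw [ContinuousWithinAt, hzero]
  exact this.congr fun t ↦ by rw [entropyKernelPrimitive, add_sub_assoc]

theorem tendsto_log_one_add_mul_div_atTop {c : ℝ} (hc : 0 < c) :
    Tendsto (fun t ↦ log (1 + c * t) / t) atTop (𝓝 0) := by
  have hlin : Tendsto (fun t ↦ 1 + c * t) atTop atTop :=
    tendsto_atTop_add_const_left _ _ (tendsto_id.const_mul_atTop hc)
  -- substitute `u = 1 + c t`, so that `t = c⁻¹ u - c⁻¹`
  refine ((tendsto_pow_log_div_mul_add_atTop c⁻¹ (-c⁻¹) 1 (inv_ne_zero hc.ne')).comp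
    hlin).congr' ?_
  filter_upwards with t
  simp only [Function.comp_apply, pow_one]
  field_simp
  rw [show 1 + c * t + -1 = c * t by ring, mul_div_mul_left _ _ hc.ne']

theorem tendsto_entropyKernelPrimitive_atTop (ha : 0 < a) :
    Tendsto (entropyKernelPrimitive a) atTop (𝓝 (-a * log a)) := by
  have hquot : Tendsto (fun t ↦ (a * log (1 + t) - log (1 + a * t)) / t) atTop (𝓝 0) := by
    simpa [mul_div_assoc, sub_div] using
      ((tendsto_log_one_add_mul_div_atTop one_pos).const_mul a).sub
        (tendsto_log_one_add_mul_div_atTop ha)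
  have hrest : Tendsto (fun t ↦ a * log (1 + t) - a * log (1 + a * t)) atTop
      (𝓝 (-a * log a)) := by
    have hgap := tendsto_log_comp_add_sub_log 1
    have := ((hgap.sub (hgap.comp (tendsto_id.const_mul_atTop ha))).const_mul a).sub_const
      (a * log a)
    rw [sub_zero, mul_zero, zero_sub, ← neg_mul] at this
    refine this.congr' ?_
    filter_upwards [eventually_gt_atTop 0] with t ht
    simp only [Function.comp_apply, id, log_mul ha.ne' ht.ne']
    ring_nf
  have := hquot.add hrest
  rw [zero_add] at this
  exact this.congr fun t ↦ by rw [entropyKernelPrimitive, add_sub_assoc]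

theorem integral_entropyKernel (ha₀ : 0 < a) (ha₁ : a ≤ 1) :
    ∫ t in Set.Ioi 0, entropyKernel a t = -a * log a := by
  rw [integral_Ioi_of_hasDerivAt_of_nonneg continuousWithinAt_entropyKernelPrimitive_zero
    (fun t ht ↦ hasDerivAt_entropyKernelPrimitive ha₀.le ht)
    (fun t ht ↦ entropyKernel_nonneg ha₀.le ha₁ (by linarith [ht.out]))
    (tendsto_entropyKernelPrimitive_atTop ha₀)]
  simp [entropyKernelPrimitive]

theorem integrableOn_entropyKernel (ha₀ : 0 < a) (ha₁ : a ≤ 1) :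
    IntegrableOn (entropyKernel a) (Set.Ioi 0) :=
  integrableOn_Ioi_deriv_of_nonneg continuousWithinAt_entropyKernelPrimitive_zero
    (fun t ht ↦ hasDerivAt_entropyKernelPrimitive ha₀.le ht)
    (fun t ht ↦ entropyKernel_nonneg ha₀.le ha₁ (by linarith [ht.out]))
    (tendsto_entropyKernelPrimitive_atTop ha₀)

end EntropyKernel

theorem esymm_zero (n : ℕ) (x : Fin n → ℝ) : esymm n 0 x = 1 := by
  simp [esymm]

theorem prod_one_add_mul_eq_sum_esymm (n : ℕ) (x : Fin n → ℝ) (t : ℝ) :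
    ∏ i, (1 + x i * t) = ∑ k ∈ range (n + 1), esymm n k x * t ^ k := by
  rw [prod_one_add, sum_powerset, card_univ, Fintype.card_fin]
  refine sum_congr rfl fun k _ ↦ ?_
  rw [esymm, sum_mul]
  refine sum_congr rfl fun s hs ↦ ?_
  rw [prod_mul_distrib, prod_const, (mem_powersetCard.1 hs).2]

theorem prod_one_add_mul_le_of_esymm_le {n : ℕ} {x y : Fin n → ℝ}
    (hE : ∀ k, 1 ≤ k → k ≤ n → esymm n k x ≤ esymm n k y) {t : ℝ} (ht : 0 ≤ t) :
    ∏ i, (1 + x i * t) ≤ ∏ i, (1 + y i * t) := by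
  rw [prod_one_add_mul_eq_sum_esymm, prod_one_add_mul_eq_sum_esymm]
  refine sum_le_sum fun k hk ↦ ?_
  obtain rfl | hk₀ := k.eq_zero_or_pos
  · simp [esymm_zero]
  · exact mul_le_mul_of_nonneg_right (hE k hk₀ (Nat.lt_succ_iff.1 (mem_range.1 hk)))
      (pow_nonneg ht k)

section ProbabilityVector

variable {ι : Type*} [Fintype ι] {x : ι → ℝ}

theorem le_one_of_sum_eq_one (hx : ∀ i, 0 ≤ x i) (hx1 : ∑ i, x i = 1) (i : ι) : x i ≤ 1 :=
  hx1 ▸ single_le_sum (fun j _ ↦ hx j) (mem_univ i)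

theorem sum_entropyKernel_eq (hx : ∀ i, 0 < x i) (hx1 : ∑ i, x i = 1) {t : ℝ} (ht : 0 < t) :
    ∑ i, entropyKernel (x i) t = (log (∏ i, (1 + x i * t)) - log (1 + t)) / t ^ 2 := by
  have hfac : ∀ i ∈ univ, 1 + x i * t ≠ 0 := fun i _ ↦ by nlinarith [mul_pos (hx i) ht]
  simp_rw [entropyKernel, ← sum_div, sum_sub_distrib, ← sum_mul, hx1, one_mul,
    log_prod hfac]

theorem integrableOn_sum_entropyKernel (hx : ∀ i, 0 < x i) (hx1 : ∀ i, x i ≤ 1) :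
    IntegrableOn (fun t ↦ ∑ i, entropyKernel (x i) t) (Set.Ioi 0) :=
  integrable_finsetSum _ fun i _ ↦ integrableOn_entropyKernel (hx i) (hx1 i)

theorem integral_sum_entropyKernel (hx : ∀ i, 0 < x i) (hx1 : ∀ i, x i ≤ 1) :
    ∫ t in Set.Ioi 0, ∑ i, entropyKernel (x i) t = -∑ i, x i * log (x i) := by
  rw [integral_finsetSum _ fun i _ ↦ integrableOn_entropyKernel (hx i) (hx1 i)]
  simp [integral_entropyKernel (hx _) (hx1 _)]

end ProbabilityVector

theorem stmt_10 (n : ℕ) (x y : Fin n → ℝ)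
    (hx : ∀ i, 0 < x i) (hy : ∀ i, 0 < y i)
    (hx1 : ∑ i, x i = 1) (hy1 : ∑ i, y i = 1)
    (hE : ∀ k, 1 ≤ k → k ≤ n → esymm n k x ≤ esymm n k y) :
    -∑ i, x i * Real.log (x i) ≤ -∑ i, y i * Real.log (y i) := by
  have hx_le := le_one_of_sum_eq_one (fun i ↦ (hx i).le) hx1
  have hy_le := le_one_of_sum_eq_one (fun i ↦ (hy i).le) hy1
  rw [← integral_sum_entropyKernel hx hx_le, ← integral_sum_entropyKernel hy hy_le]
  refine setIntegral_mono_on (integrableOn_sum_entropyKernel hx hx_le)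
    (integrableOn_sum_entropyKernel hy hy_le) measurableSet_Ioi fun t ht ↦ ?_
  have ht₀ : (0 : ℝ) < t := ht
  have hpos : 0 < ∏ i, (1 + x i * t) := prod_pos fun i _ ↦ by nlinarith [mul_pos (hx i) ht₀]
  have hprod := prod_one_add_mul_le_of_esymm_le hE ht₀.le
  rw [sum_entropyKernel_eq hx hx1 ht₀, sum_entropyKernel_eq hy hy1 ht₀]
  gcongr
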